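/- Let 0 → U →ι V →p W → 0 be a short exact sequence of vector spaces over a field, equipped with endomorphisms D_U, D_V, D_W satisfying ι ∘ D_U = D_V ∘ ι and p ∘ D_V = D_W ∘ p, and suppose D_V^N = 0 for some integer N ≥ 2 (hence also D_U^N = 0 and D_W^N = 0). For 1 ≤ i ≤ N−1 and X ∈ {U,V,W}, set H^i_N(X) := ker(D_X^i)/range(D_X^{N−i}), and let ι_* and p_* denote the maps induced by ι and p. Then for each 1 ≤ i ≤ N−1 there exist linear connecting maps ∂ : H^i_N(W) → H^{N−i}_N(U) and ∂' : H^{N−i}_N(W) → H^i_N(U) such that the six-term sequence H^i_N(U) →ι_* H^i_N(V) →p_* H^i_N(W) →∂ H^{N−i}_N(U) →ι_* H^{N−i}_N(V) →p_* H^{N−i}_N(W) →∂' H^i_N(U) is exact at all six places. (The six-term exact sequence for N-differentials constructed in Section 5, following Dubois-Violette.) -/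

import Mathlib

open LinearMap Module

section

variable {𝕜 : Type*} [Field 𝕜] {U V : Type*}
  [AddCommGroup U] [Module 𝕜 U] [AddCommGroup V] [Module 𝕜 V]

/-- An intertwiner of endomorphisms intertwines all their powers. -/
theorem comp_pow_eq_pow_comp (f : U →ₗ[𝕜] V) {DU : Module.End 𝕜 U} {DV : Module.End 𝕜 V}
    (hf : f ∘ₗ DU = DV ∘ₗ f) (n : ℕ) : f ∘ₗ (DU ^ n) = (DV ^ n) ∘ₗ f := by
  induction n with
  | zero => ext x; simp
  | succ n ih =>
    ext x
    have h1 := DFunLike.congr_fun ih (DU x)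
    have h2 := DFunLike.congr_fun hf x
    simp only [LinearMap.comp_apply, pow_succ, Module.End.mul_apply] at h1 h2 ⊢
    rw [h1, h2]

/-- An intertwiner maps `ker DU^n` into `ker DV^n`. -/
theorem intertwiner_map_ker (f : U →ₗ[𝕜] V) {DU : Module.End 𝕜 U} {DV : Module.End 𝕜 V}
    (hf : f ∘ₗ DU = DV ∘ₗ f) (n : ℕ) : ∀ x ∈ ker (DU ^ n), f x ∈ ker (DV ^ n) := by
  intro x hx
  simp only [LinearMap.mem_ker] at hx ⊢
  have := DFunLike.congr_fun (comp_pow_eq_pow_comp f hf n) x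
  simp only [LinearMap.comp_apply] at this
  rw [← this, hx, map_zero]

/-- An intertwiner maps `range DU^n` into `range DV^n`. -/
theorem intertwiner_map_range (f : U →ₗ[𝕜] V) {DU : Module.End 𝕜 U} {DV : Module.End 𝕜 V}
    (hf : f ∘ₗ DU = DV ∘ₗ f) (n : ℕ) : ∀ x ∈ range (DU ^ n), f x ∈ range (DV ^ n) := by
  rintro x ⟨y, rfl⟩
  have := DFunLike.congr_fun (comp_pow_eq_pow_comp f hf n) y
  simp only [LinearMap.comp_apply] at this
  exact ⟨f y, this.symm⟩

/-- The cohomology `H^i_N(V, D) = ker D^i / range D^{N−i}` of the `N`-differential `D`. -/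
abbrev differentialCohomology (D : Module.End 𝕜 V) (N i : ℕ) :=
  ↥(ker (D ^ i)) ⧸ Submodule.comap (ker (D ^ i)).subtype (range (D ^ (N - i)))

/-- The map `H^i_N(U, DU) → H^i_N(V, DV)` induced by an intertwiner `f`. -/
noncomputable def inducedCohomologyMap (f : U →ₗ[𝕜] V) {DU : Module.End 𝕜 U}
    {DV : Module.End 𝕜 V} (hf : f ∘ₗ DU = DV ∘ₗ f) (N i : ℕ) :
    differentialCohomology DU N i →ₗ[𝕜] differentialCohomology DV N i :=
  Submodule.mapQ _ _ (f.restrict (intertwiner_map_ker f hf i)) (by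
    intro x hx
    simp only [Submodule.mem_comap, LinearMap.restrict_apply, Submodule.coe_subtype] at hx ⊢
    exact intertwiner_map_range f hf (N - i) _ hx)

end

/-!
For `D` with `D ^ N = 0`, the map `D ^ i : X ⧸ range D^(N-i) → ker D^(N-i)` has kernel
`H^i_N(X)` and cokernel `H^(N-i)_N(X)`. A short exact sequence `0 → U → V → W → 0` gives a
right exact row of the cokernels and a left exact row of the kernels, and `D ^ i` maps the first
to the second. The snake lemma then yields the connecting map `H^i_N(W) → H^(N-i)_N(U)` together
with exactness on both sides of it; exactness at `H^i_N(V)` is checked directly. Exchanging the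
roles of `i` and `N - i` closes the hexagon.
-/

section NilpotentEndomorphism

variable {𝕜 V : Type*} [Field 𝕜] [AddCommGroup V] [Module 𝕜 V] {D : Module.End 𝕜 V} {N : ℕ}

theorem pow_apply_pow_apply_eq_zero (hD : D ^ N = 0) {a b : ℕ} (h : N ≤ a + b) (x : V) :
    (D ^ a) ((D ^ b) x) = 0 := by
  rw [← Module.End.mul_apply, ← pow_add, pow_eq_zero_of_le h hD, LinearMap.zero_apply]

variable (D)

def powCokerToKer (hD : D ^ N = 0) (i : ℕ) :
    V ⧸ range (D ^ (N - i)) →ₗ[𝕜] ker (D ^ (N - i)) :=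
  (range (D ^ (N - i))).liftQ
    ((D ^ i).codRestrict _ fun x => pow_apply_pow_apply_eq_zero hD (by omega) x)
    (by
      rintro _ ⟨x, rfl⟩
      exact Subtype.ext (pow_apply_pow_apply_eq_zero hD (by omega) x))

def cohomologyToCoker (N i : ℕ) :
    differentialCohomology D N i →ₗ[𝕜] V ⧸ range (D ^ (N - i)) :=
  Submodule.mapQ _ _ (ker (D ^ i)).subtype le_rfl

theorem cohomologyToCoker_injective (N i : ℕ) :
    Function.Injective (cohomologyToCoker D N i) := by
  rw [← LinearMap.ker_eq_bot, LinearMap.ker_eq_bot']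
  intro c hc
  obtain ⟨x, rfl⟩ := Submodule.Quotient.mk_surjective _ c
  exact (Submodule.Quotient.mk_eq_zero _).mpr
    ((Submodule.Quotient.mk_eq_zero (range (D ^ (N - i)))).mp hc)

theorem exact_cohomologyToCoker_powCokerToKer (hD : D ^ N = 0) (i : ℕ) :
    Function.Exact (cohomologyToCoker D N i) (powCokerToKer D hD i) := by
  intro c
  obtain ⟨x, rfl⟩ := Submodule.Quotient.mk_surjective _ c
  constructor
  · intro hx
    exact ⟨Submodule.Quotient.mk ⟨x, congrArg Subtype.val hx⟩, rfl⟩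
  · rintro ⟨c, hc⟩
    obtain ⟨y, rfl⟩ := Submodule.Quotient.mk_surjective _ c
    rw [← hc]
    exact Subtype.ext y.2

theorem exact_powCokerToKer_mkQ (hD : D ^ N = 0) {i : ℕ} (hi : i ≤ N) :
    Function.Exact (powCokerToKer D hD i)
      (Submodule.mkQ _ : _ →ₗ[𝕜] differentialCohomology D N (N - i)) := by
  intro y
  rw [Submodule.mkQ_apply, Submodule.Quotient.mk_eq_zero, Submodule.mem_comap,
    Nat.sub_sub_self hi]
  constructor
  · rintro ⟨x, hx⟩
    exact ⟨Submodule.Quotient.mk x, Subtype.ext hx⟩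
  · rintro ⟨c, rfl⟩
    obtain ⟨x, rfl⟩ := Submodule.Quotient.mk_surjective _ c
    exact ⟨x, rfl⟩

end NilpotentEndomorphism

section Intertwining

variable {𝕜 U V : Type*} [Field 𝕜] [AddCommGroup U] [Module 𝕜 U] [AddCommGroup V] [Module 𝕜 V]
  {DU : Module.End 𝕜 U} {DV : Module.End 𝕜 V} {f : U →ₗ[𝕜] V}

theorem pow_apply_of_intertwining (hf : f ∘ₗ DU = DV ∘ₗ f) (n : ℕ) (x : U) :
    f ((DU ^ n) x) = (DV ^ n) (f x) :=
  LinearMap.congr_fun (comp_pow_eq_pow_comp f hf n) x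

theorem pow_eq_zero_of_injective_intertwining (hf : f ∘ₗ DU = DV ∘ₗ f)
    (hinj : Function.Injective f) {n : ℕ} (hDV : DV ^ n = 0) : DU ^ n = 0 := by
  ext x
  apply hinj
  rw [pow_apply_of_intertwining hf, hDV, LinearMap.zero_apply, LinearMap.zero_apply, map_zero]

theorem pow_eq_zero_of_surjective_intertwining (hf : f ∘ₗ DU = DV ∘ₗ f)
    (hsurj : Function.Surjective f) {n : ℕ} (hDU : DU ^ n = 0) : DV ^ n = 0 := by
  ext y
  obtain ⟨x, rfl⟩ := hsurj y
  rw [← pow_apply_of_intertwining hf, hDU, LinearMap.zero_apply, map_zero,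
    LinearMap.zero_apply]

theorem range_pow_eq_map_range_pow_of_surjective (hf : f ∘ₗ DU = DV ∘ₗ f)
    (hsurj : Function.Surjective f) (n : ℕ) : range (DV ^ n) = (range (DU ^ n)).map f := by
  rw [← LinearMap.range_comp, comp_pow_eq_pow_comp f hf,
    LinearMap.range_comp_of_range_eq_top _ (LinearMap.range_eq_top.mpr hsurj)]

theorem mapQ_range_pow_surjective (hf : f ∘ₗ DU = DV ∘ₗ f) (hsurj : Function.Surjective f)
    (n : ℕ) :
    Function.Surjective
      ((range (DU ^ n)).mapQ (range (DV ^ n)) f (intertwiner_map_range f hf n)) := by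
  intro c
  obtain ⟨y, rfl⟩ := Submodule.Quotient.mk_surjective _ c
  obtain ⟨x, rfl⟩ := hsurj y
  exact ⟨Submodule.Quotient.mk x, rfl⟩

theorem restrict_comp_powCokerToKer (hf : f ∘ₗ DU = DV ∘ₗ f) {N : ℕ} (hDU : DU ^ N = 0)
    (hDV : DV ^ N = 0) (i : ℕ) :
    f.restrict (intertwiner_map_ker f hf (N - i)) ∘ₗ powCokerToKer DU hDU i =
      powCokerToKer DV hDV i ∘ₗ
        (range (DU ^ (N - i))).mapQ (range (DV ^ (N - i))) f (intertwiner_map_range f hf _) := by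
  ext x
  exact pow_apply_of_intertwining hf i x

theorem mapQ_comp_cohomologyToCoker (hf : f ∘ₗ DU = DV ∘ₗ f) (N i : ℕ) :
    (range (DU ^ (N - i))).mapQ (range (DV ^ (N - i))) f (intertwiner_map_range f hf _) ∘ₗ
        cohomologyToCoker DU N i =
      cohomologyToCoker DV N i ∘ₗ inducedCohomologyMap f hf N i := by
  ext x
  rfl

end Intertwining

section ShortExact

variable {𝕜 U V W : Type*} [Field 𝕜]
  [AddCommGroup U] [Module 𝕜 U] [AddCommGroup V] [Module 𝕜 V] [AddCommGroup W] [Module 𝕜 W]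
  {ι : U →ₗ[𝕜] V} {p : V →ₗ[𝕜] W}
  {DU : Module.End 𝕜 U} {DV : Module.End 𝕜 V} {DW : Module.End 𝕜 W}

theorem exact_restrict_ker_pow (hιD : ι ∘ₗ DU = DV ∘ₗ ι) (hpD : p ∘ₗ DV = DW ∘ₗ p)
    (hexact : Function.Exact ι p) (hinj : Function.Injective ι) (n : ℕ) :
    Function.Exact (ι.restrict (intertwiner_map_ker ι hιD n))
      (p.restrict (intertwiner_map_ker p hpD n)) := by
  rintro ⟨y, hy⟩
  constructor
  · intro hpy
    obtain ⟨x, rfl⟩ := (hexact y).mp (congrArg Subtype.val hpy)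
    have hx : x ∈ ker (DU ^ n) := by
      rw [LinearMap.mem_ker] at hy ⊢
      apply hinj
      rw [pow_apply_of_intertwining hιD, hy, map_zero]
    exact ⟨⟨x, hx⟩, rfl⟩
  · rintro ⟨x, hx⟩
    rw [← hx]
    exact Subtype.ext (hexact.apply_apply_eq_zero x)

theorem exact_mapQ_range_pow (hιD : ι ∘ₗ DU = DV ∘ₗ ι) (hpD : p ∘ₗ DV = DW ∘ₗ p)
    (hexact : Function.Exact ι p) (hsurj : Function.Surjective p) (n : ℕ) :
    Function.Exact ((range (DU ^ n)).mapQ (range (DV ^ n)) ι (intertwiner_map_range ι hιD n))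
      ((range (DV ^ n)).mapQ (range (DW ^ n)) p (intertwiner_map_range p hpD n)) := by
  rw [hexact.exact_mapQ_iff, ← range_pow_eq_map_range_pow_of_surjective hpD hsurj]
  exact inf_le_right

theorem exact_inducedCohomologyMap (hιD : ι ∘ₗ DU = DV ∘ₗ ι) (hpD : p ∘ₗ DV = DW ∘ₗ p)
    (hexact : Function.Exact ι p) (hinj : Function.Injective ι) (hsurj : Function.Surjective p)
    {N : ℕ} (hDV : DV ^ N = 0) (i : ℕ) :
    Function.Exact (inducedCohomologyMap ι hιD N i) (inducedCohomologyMap p hpD N i) := by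
  rw [inducedCohomologyMap, inducedCohomologyMap,
    (exact_restrict_ker_pow hιD hpD hexact hinj i).exact_mapQ_iff]
  rintro ⟨w, hw⟩ ⟨-, hwD⟩
  change w ∈ range (DW ^ (N - i)) at hwD
  rw [range_pow_eq_map_range_pow_of_surjective hpD hsurj] at hwD
  obtain ⟨_, ⟨v, rfl⟩, rfl⟩ := hwD
  have hv : (DV ^ (N - i)) v ∈ ker (DV ^ i) := pow_apply_pow_apply_eq_zero hDV (by omega) v
  exact ⟨⟨_, hv⟩, ⟨v, rfl⟩, rfl⟩

theorem exists_connecting_exact (hιD : ι ∘ₗ DU = DV ∘ₗ ι) (hpD : p ∘ₗ DV = DW ∘ₗ p)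
    (hexact : Function.Exact ι p) (hinj : Function.Injective ι) (hsurj : Function.Surjective p)
    {N : ℕ} (hDV : DV ^ N = 0) {i j : ℕ} (hij : i + j = N) :
    ∃ d : differentialCohomology DW N i →ₗ[𝕜] differentialCohomology DU N j,
      Function.Exact (inducedCohomologyMap p hpD N i) d ∧
        Function.Exact d (inducedCohomologyMap ι hιD N j) := by
  obtain rfl : j = N - i := by omega
  have hDU := pow_eq_zero_of_injective_intertwining hιD hinj hDV
  have hDW := pow_eq_zero_of_surjective_intertwining hpD hsurj hDV
  have hrestrict_inj : Function.Injective (ι.restrict (intertwiner_map_ker ι hιD (N - i))) :=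
    fun a b hab => Subtype.ext (hinj (congrArg Subtype.val hab))
  refine ⟨SnakeLemma.δ' (powCokerToKer DU hDU i) (powCokerToKer DV hDV i)
    (powCokerToKer DW hDW i) _ _ (exact_mapQ_range_pow hιD hpD hexact hsurj (N - i)) _ _
    (exact_restrict_ker_pow hιD hpD hexact hinj (N - i))
    (restrict_comp_powCokerToKer hιD hDU hDV i) (restrict_comp_powCokerToKer hpD hDV hDW i)
    (cohomologyToCoker DW N i) (exact_cohomologyToCoker_powCokerToKer DW hDW i)
    (Submodule.mkQ _) (exact_powCokerToKer_mkQ DU hDU (by omega))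
    (mapQ_range_pow_surjective hpD hsurj (N - i)) hrestrict_inj, ?_, ?_⟩
  · exact SnakeLemma.exact_δ'_right _ _ _ _ _ _ _ _ _ _ _ _
      (exact_cohomologyToCoker_powCokerToKer DV hDV i) _ _ _ _ _ _ _
      (mapQ_comp_cohomologyToCoker hpD N i) (cohomologyToCoker_injective DW N i)
  · exact SnakeLemma.exact_δ'_left _ _ _ _ _ _ _ _ _ _ _ _ _ _ _ (Submodule.mkQ _)
      (exact_powCokerToKer_mkQ DV hDV (by omega)) _ _ _ (Submodule.mapQ_mkQ _ _ _)
      (Submodule.mkQ_surjective _)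
end ShortExact

theorem stmt17_general {𝕜 U V W : Type*} [Field 𝕜]
    [AddCommGroup U] [Module 𝕜 U] [AddCommGroup V] [Module 𝕜 V] [AddCommGroup W] [Module 𝕜 W]
    (ι : U →ₗ[𝕜] V) (p : V →ₗ[𝕜] W)
    (hinj : Function.Injective ι) (hsurj : Function.Surjective p)
    (hexact : range ι = ker p)
    (DU : Module.End 𝕜 U) (DV : Module.End 𝕜 V) (DW : Module.End 𝕜 W)
    (hιD : ι ∘ₗ DU = DV ∘ₗ ι) (hpD : p ∘ₗ DV = DW ∘ₗ p)
    (N : ℕ) (hDV : DV ^ N = 0)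
    (i : ℕ) (hi2 : i ≤ N - 1) :
    ∃ (d : differentialCohomology DW N i →ₗ[𝕜] differentialCohomology DU N (N - i))
      (d' : differentialCohomology DW N (N - i) →ₗ[𝕜] differentialCohomology DU N i),
      range (inducedCohomologyMap ι hιD N i) = ker (inducedCohomologyMap p hpD N i) ∧
      range (inducedCohomologyMap p hpD N i) = ker d ∧
      range d = ker (inducedCohomologyMap ι hιD N (N - i)) ∧
      range (inducedCohomologyMap ι hιD N (N - i)) =
        ker (inducedCohomologyMap p hpD N (N - i)) ∧
      range (inducedCohomologyMap p hpD N (N - i)) = ker d' ∧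
      range d' = ker (inducedCohomologyMap ι hιD N i) := by
  have hιp : Function.Exact ι p := LinearMap.exact_iff.mpr hexact.symm
  have hcoh := exact_inducedCohomologyMap hιD hpD hιp hinj hsurj hDV
  obtain ⟨d, hpd, hdι⟩ :=
    exists_connecting_exact hιD hpD hιp hinj hsurj hDV (i := i) (j := N - i) (by omega)
  obtain ⟨d', hpd', hd'ι⟩ :=
    exists_connecting_exact hιD hpD hιp hinj hsurj hDV (i := N - i) (j := i) (by omega)
  exact ⟨d, d', (hcoh i).linearMap_ker_eq.symm, hpd.linearMap_ker_eq.symm,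
    hdι.linearMap_ker_eq.symm, (hcoh (N - i)).linearMap_ker_eq.symm,
    hpd'.linearMap_ker_eq.symm, hd'ι.linearMap_ker_eq.symm⟩

/-- six-term exact sequence for `N`-differentials, following
Dubois-Violette. For a short exact sequence `0 → U → V → W → 0` with compatible
endomorphisms and `D_V^N = 0` (`N ≥ 2`), for each `1 ≤ i ≤ N−1` there are connecting
maps `∂ : H^i_N(W) → H^{N−i}_N(U)` and `∂' : H^{N−i}_N(W) → H^i_N(U)` making the
six-term sequence
`H^i_N(U) → H^i_N(V) → H^i_N(W) → H^{N−i}_N(U) → H^{N−i}_N(V) → H^{N−i}_N(W) → H^i_N(U)`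
exact at all six places. -/
theorem stmt17 {𝕜 U V W : Type*} [Field 𝕜]
    [AddCommGroup U] [Module 𝕜 U] [AddCommGroup V] [Module 𝕜 V] [AddCommGroup W] [Module 𝕜 W]
    (ι : U →ₗ[𝕜] V) (p : V →ₗ[𝕜] W)
    (hinj : Function.Injective ι) (hsurj : Function.Surjective p)
    (hexact : range ι = ker p)
    (DU : Module.End 𝕜 U) (DV : Module.End 𝕜 V) (DW : Module.End 𝕜 W)
    (hιD : ι ∘ₗ DU = DV ∘ₗ ι) (hpD : p ∘ₗ DV = DW ∘ₗ p)
    (N : ℕ) (hN : 2 ≤ N) (hDV : DV ^ N = 0)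
    (i : ℕ) (hi1 : 1 ≤ i) (hi2 : i ≤ N - 1) :
    ∃ (d : differentialCohomology DW N i →ₗ[𝕜] differentialCohomology DU N (N - i))
      (d' : differentialCohomology DW N (N - i) →ₗ[𝕜] differentialCohomology DU N i),
      range (inducedCohomologyMap ι hιD N i) = ker (inducedCohomologyMap p hpD N i) ∧
      range (inducedCohomologyMap p hpD N i) = ker d ∧
      range d = ker (inducedCohomologyMap ι hιD N (N - i)) ∧
      range (inducedCohomologyMap ι hιD N (N - i)) =
        ker (inducedCohomologyMap p hpD N (N - i)) ∧
      range (inducedCohomologyMap p hpD N (N - i)) = ker d' ∧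
      range d' = ker (inducedCohomologyMap ι hιD N i) :=
  stmt17_general ι p hinj hsurj hexact DU DV DW hιD hpD N hDV i hi2
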